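/- Let F be an algebraically closed field of characteristic different from 2 and let l ≥ 4. Then the normalizer of T̄ in SO_J is the internal semidirect product of T̄ by W̄; that is: W̄ is contained in N_{SO_J}(T̄), T̄ ∩ W̄ = {1}, and every element of N_{SO_J}(T̄) can be written as t·w with t ∈ T̄ and w ∈ W̄. -/

import Mathlib

open Matrix

noncomputable section

variable (n : ℕ) (F : Type) [Field F]

/-- The antidiagonal matrix `J`: entry `(i,j)` (1-based) is `1` iff `i + j = n + 1`. -/
def Jmat : Matrix (Fin n) (Fin n) F :=
  Matrix.of fun i j => if (i : ℕ) + (j : ℕ) + 1 = n then 1 else 0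

/-- The permutation `ι` of `{1,…,n}` given (1-based) by `i ↦ n + 1 - i`. -/
def iotaPerm : Equiv.Perm (Fin n) where
  toFun i := ⟨n - 1 - (i : ℕ), by have := i.isLt; omega⟩
  invFun i := ⟨n - 1 - (i : ℕ), by have := i.isLt; omega⟩
  left_inv i := by have := i.isLt; apply Fin.ext; show n - 1 - (n - 1 - (i : ℕ)) = _; omega
  right_inv i := by have := i.isLt; apply Fin.ext; show n - 1 - (n - 1 - (i : ℕ)) = _; omega

/-- The permutation matrix `P_σ`, with `(i,j)` entry `1` iff `i = σ j`. -/
def permMat (σ : Equiv.Perm (Fin n)) : Matrix (Fin n) (Fin n) F :=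
  Matrix.of fun i j => if i = σ j then 1 else 0

lemma permMat_mul (σ τ : Equiv.Perm (Fin n)) :
    permMat n F σ * permMat n F τ = permMat n F (σ * τ) := by
  ext i j
  simp only [permMat, Matrix.mul_apply, Matrix.of_apply]
  rw [Finset.sum_eq_single (τ j)]
  · simp [Equiv.Perm.mul_apply]; exact if_congr Iff.rfl rfl rfl
  · intro k _ hk; simp [hk]
  · intro h; simp at h

lemma permMat_one : permMat n F 1 = 1 := by
  ext i j
  simp [permMat, Matrix.one_apply]; exact if_congr Iff.rfl rfl rfl

/-- The permutation matrix `P_σ` as an element of `GL_n(F)`. -/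
def permGL (σ : Equiv.Perm (Fin n)) : GL (Fin n) F :=
  ⟨permMat n F σ, permMat n F σ⁻¹,
    by rw [permMat_mul]; simp [permMat_one],
    by rw [permMat_mul]; simp [permMat_one]⟩

/-- The orthogonal group `O_J = {x ∈ GL_n(F) : xᵀ J x = J}` as a subgroup of `GL_n(F)`. -/
def OJ : Subgroup (GL (Fin n) F) where
  carrier := {x | (x : Matrix (Fin n) (Fin n) F)ᵀ * Jmat n F * (x : Matrix (Fin n) (Fin n) F) = Jmat n F}
  one_mem' := by simp
  mul_mem' := by
    intro a b ha hb
    simp only [Set.mem_setOf_eq] at ha hb ⊢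
    rw [Units.val_mul, transpose_mul]
    calc (b : Matrix (Fin n) (Fin n) F)ᵀ * (a : Matrix (Fin n) (Fin n) F)ᵀ * Jmat n F *
          ((a : Matrix (Fin n) (Fin n) F) * (b : Matrix (Fin n) (Fin n) F))
        = (b : Matrix (Fin n) (Fin n) F)ᵀ *
            ((a : Matrix (Fin n) (Fin n) F)ᵀ * Jmat n F * (a : Matrix (Fin n) (Fin n) F)) *
            (b : Matrix (Fin n) (Fin n) F) := by noncomm_ring
      _ = Jmat n F := by rw [ha, hb]
  inv_mem' := by
    intro a ha
    simp only [Set.mem_setOf_eq] at ha ⊢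
    calc ((a⁻¹ : GL (Fin n) F) : Matrix (Fin n) (Fin n) F)ᵀ * Jmat n F *
          ((a⁻¹ : GL (Fin n) F) : Matrix (Fin n) (Fin n) F)
        = ((a⁻¹ : GL (Fin n) F) : Matrix (Fin n) (Fin n) F)ᵀ *
            ((a : Matrix (Fin n) (Fin n) F)ᵀ * Jmat n F * (a : Matrix (Fin n) (Fin n) F)) *
            ((a⁻¹ : GL (Fin n) F) : Matrix (Fin n) (Fin n) F) := by rw [ha]
      _ = ((a : Matrix (Fin n) (Fin n) F) * ((a⁻¹ : GL (Fin n) F) : Matrix (Fin n) (Fin n) F))ᵀ *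
            Jmat n F *
            ((a : Matrix (Fin n) (Fin n) F) * ((a⁻¹ : GL (Fin n) F) : Matrix (Fin n) (Fin n) F)) := by
          rw [transpose_mul]; noncomm_ring
      _ = Jmat n F := by rw [Units.mul_inv]; simp

/-- `SL_n(F)` viewed as a subgroup of `GL_n(F)`. -/
def SLgl : Subgroup (GL (Fin n) F) where
  carrier := {x | (x : Matrix (Fin n) (Fin n) F).det = 1}
  one_mem' := by simp
  mul_mem' := by
    intro a b ha hb
    simp only [Set.mem_setOf_eq] at ha hb ⊢
    rw [Units.val_mul, det_mul, ha, hb, one_mul]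
  inv_mem' := by
    intro a ha
    simp only [Set.mem_setOf_eq] at ha ⊢
    have h : ((a : Matrix (Fin n) (Fin n) F) * ((a⁻¹ : GL (Fin n) F) : Matrix (Fin n) (Fin n) F)).det = 1 := by
      rw [Units.mul_inv]; simp
    rw [det_mul, ha, one_mul] at h
    exact h

/-- `SO_J := O_J ∩ SL_n(F)`. -/
def SOJ : Subgroup (GL (Fin n) F) := OJ n F ⊓ SLgl n F

/-- The diagonal matrices lying in a subgroup `G` of `GL_n(F)` form a subgroup. -/
def diagIn (G : Subgroup (GL (Fin n) F)) : Subgroup (GL (Fin n) F) where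
  carrier := {x | x ∈ G ∧ (x : Matrix (Fin n) (Fin n) F).IsDiag}
  one_mem' := ⟨one_mem _, Matrix.isDiag_one⟩
  mul_mem' := by
    rintro a b ⟨haG, haD⟩ ⟨hbG, hbD⟩
    refine ⟨mul_mem haG hbG, ?_⟩
    rw [Units.val_mul, ← haD.diagonal_diag, ← hbD.diagonal_diag, diagonal_mul_diagonal]
    exact isDiag_diagonal _
  inv_mem' := by
    rintro a ⟨haG, haD⟩
    refine ⟨inv_mem haG, ?_⟩
    rw [Matrix.coe_units_inv, ← haD.diagonal_diag, inv_diagonal]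
    exact isDiag_diagonal _

/-- `T̄`, the subgroup of all diagonal matrices contained in `O_J`. -/
def Tbar : Subgroup (GL (Fin n) F) := diagIn n F (OJ n F)

/-- `V̄ = {P_σ : σ ∘ ι = ι ∘ σ}` as a subgroup of `GL_n(F)`. -/
def Vbar : Subgroup (GL (Fin n) F) where
  carrier := {x | ∃ σ : Equiv.Perm (Fin n),
      σ * iotaPerm n = iotaPerm n * σ ∧ (x : Matrix (Fin n) (Fin n) F) = permMat n F σ}
  one_mem' := ⟨1, by simp, by simp [permMat_one]⟩
  mul_mem' := by
    rintro a b ⟨σ, hσ, ha⟩ ⟨τ, hτ, hb⟩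
    refine ⟨σ * τ, ?_, ?_⟩
    · rw [mul_assoc, hτ, ← mul_assoc, hσ, mul_assoc]
    · rw [Units.val_mul, ha, hb, permMat_mul]
  inv_mem' := by
    rintro a ⟨σ, hσ, ha⟩
    have hau : a = permGL n F σ := Units.ext ha
    exact ⟨σ⁻¹, (Commute.inv_left hσ : _), by rw [hau]; rfl⟩

/-- `W̄ := V̄ ∩ SL_n(F)`. -/
def Wbar : Subgroup (GL (Fin n) F) := Vbar n F ⊓ SLgl n F

end

/-!
Conjugation by `x` in the normalizer sends a regular element `t ∈ T̄` (pairwise distinct diagonal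
entries, which exists since `F` is infinite) to a diagonal matrix `s`, so `s x = x t`. Comparing
entries, each row of `x` has a single nonzero entry, hence `x = D P_σ` is monomial. Evaluating
`xᵀ J x = J` at the antidiagonal entries forces `σ ι = ι σ`, so `P_σ ∈ V̄ ⊆ O_J` and
`D = x P_σ⁻¹ ∈ T̄`. For `n` even, `ι` has no fixed points and pairs the entries of `D ∈ T̄` into
products equal to `1`, so `det D = 1` and thus `det P_σ = 1`, i.e. `P_σ ∈ W̄`.
-/

section

variable {n : ℕ} {F : Type} [Field F]

lemma iotaPerm_apply_val (i : Fin n) : (iotaPerm n i : ℕ) = n - 1 - i := rfl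

lemma iotaPerm_iotaPerm (i : Fin n) : iotaPerm n (iotaPerm n i) = i :=
  (iotaPerm n).left_inv i

lemma iotaPerm_ne_self (hn : Even n) (i : Fin n) : iotaPerm n i ≠ i := by
  intro h
  have := congrArg Fin.val h
  rw [iotaPerm_apply_val] at this
  obtain ⟨k, rfl⟩ := hn
  omega

lemma Jmat_apply (i j : Fin n) : Jmat n F i j = if j = iotaPerm n i then 1 else 0 := by
  simp only [Jmat, of_apply, Fin.ext_iff, iotaPerm_apply_val]
  exact if_congr (by omega) rfl rfl

lemma permMat_apply (σ : Equiv.Perm (Fin n)) (i j : Fin n) :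
    permMat n F σ i j = if i = σ j then 1 else 0 := rfl

lemma permMat_transpose (σ : Equiv.Perm (Fin n)) : (permMat n F σ)ᵀ = permMat n F σ⁻¹ := by
  ext i j
  simp only [permMat, transpose_apply, of_apply, Equiv.Perm.eq_inv_iff_eq]
  exact if_congr eq_comm rfl rfl

lemma permMat_transpose_mul_mul_permMat (σ : Equiv.Perm (Fin n))
    (M : Matrix (Fin n) (Fin n) F) :
    (permMat n F σ)ᵀ * M * permMat n F σ = M.submatrix σ σ := by
  ext i j
  simp [permMat, mul_apply]

lemma permMat_transpose_mul_Jmat_mul_permMat {σ : Equiv.Perm (Fin n)}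
    (hσ : σ * iotaPerm n = iotaPerm n * σ) :
    (permMat n F σ)ᵀ * Jmat n F * permMat n F σ = Jmat n F := by
  have hσ' (i : Fin n) : iotaPerm n (σ i) = σ (iotaPerm n i) := (DFunLike.congr_fun hσ i).symm
  ext i j
  simp only [permMat_transpose_mul_mul_permMat, submatrix_apply, Jmat_apply, hσ',
    EmbeddingLike.apply_eq_iff_eq]

lemma commute_iotaPerm_of_transpose_mul_Jmat_mul {d : Fin n → F} {σ : Equiv.Perm (Fin n)}
    (h : (diagonal d * permMat n F σ)ᵀ * Jmat n F * (diagonal d * permMat n F σ) = Jmat n F) :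
    σ * iotaPerm n = iotaPerm n * σ := by
  ext i : 1
  by_contra hne
  rw [Equiv.Perm.mul_apply, Equiv.Perm.mul_apply] at hne
  have := congrFun₂ h i (iotaPerm n i)
  rw [transpose_mul, diagonal_transpose, show ∀ A B C D : Matrix (Fin n) (Fin n) F,
    A * B * C * (B * D) = A * (B * C * B) * D from fun _ _ _ _ => by noncomm_ring,
    permMat_transpose_mul_mul_permMat, submatrix_apply, mul_diagonal, diagonal_mul,
    Jmat_apply, Jmat_apply, if_neg hne, if_pos rfl] at this
  simp at this

lemma diagonal_transpose_mul_Jmat_mul_diagonal_eq_iff {d : Fin n → F} :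
    (diagonal d)ᵀ * Jmat n F * diagonal d = Jmat n F ↔ ∀ i, d i * d (iotaPerm n i) = 1 := by
  rw [diagonal_transpose]
  constructor
  · intro h i
    simpa [Jmat_apply] using congrFun₂ h i (iotaPerm n i)
  · intro h
    ext i j
    rw [mul_diagonal, diagonal_mul, Jmat_apply]
    split_ifs with hj
    · rw [mul_one, hj, h]
    · rw [mul_zero, zero_mul]

lemma prod_eq_one_of_mul_iotaPerm_eq_one (hn : Even n) {d : Fin n → F}
    (hd : ∀ i, d i * d (iotaPerm n i) = 1) : ∏ i, d i = 1 :=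
  Finset.prod_ninvolution (iotaPerm n) hd (fun i _ => iotaPerm_ne_self hn i)
    (fun _ => Finset.mem_univ _) iotaPerm_iotaPerm

lemma eq_of_diagonal_mul_eq_mul_diagonal {A : Matrix (Fin n) (Fin n) F} {s t : Fin n → F}
    (h : diagonal s * A = A * diagonal t) (ht : Function.Injective t) {i j k : Fin n}
    (hj : A i j ≠ 0) (hk : A i k ≠ 0) : j = k := by
  have key : ∀ j, A i j ≠ 0 → t j = s i := fun j hj => by
    have := congrFun₂ h i j
    rw [diagonal_mul, mul_diagonal, mul_comm (s i)] at this
    exact (mul_left_cancel₀ hj this).symm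
  exact ht ((key j hj).trans (key k hk).symm)

lemma exists_eq_diagonal_mul_permMat {A : Matrix (Fin n) (Fin n) F} (hA : A.det ≠ 0)
    (hrow : ∀ i j k, A i j ≠ 0 → A i k ≠ 0 → j = k) :
    ∃ (d : Fin n → F) (σ : Equiv.Perm (Fin n)), A = diagonal d * permMat n F σ := by
  have hrow_ne : ∀ i, ∃ j, A i j ≠ 0 := fun i => by
    by_contra! h
    exact hA (det_eq_zero_of_row_eq_zero i h)
  choose c hc using hrow_ne
  have hc_surj : Function.Surjective c := fun j => by
    obtain ⟨i, hi⟩ : ∃ i, A i j ≠ 0 := by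
      by_contra! h
      exact hA (det_eq_zero_of_column_eq_zero j h)
    exact ⟨i, hrow i _ _ (hc i) hi⟩
  let e := Equiv.ofBijective c ⟨Finite.injective_iff_surjective.mpr hc_surj, hc_surj⟩
  refine ⟨fun i => A i (c i), e.symm, ?_⟩
  ext i j
  have he : i = e.symm j ↔ c i = j := e.eq_symm_apply
  rw [diagonal_mul, permMat_apply]
  by_cases hij : c i = j
  · rw [if_pos (he.2 hij), mul_one, hij]
  · rw [if_neg (mt he.1 hij), mul_zero]
    by_contra hne
    exact hij (hrow i _ _ (hc i) hne)

lemma exists_units_pow_ne_one (K : Type*) [Field K] [Infinite K] (N : ℕ) :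
    ∃ a : Kˣ, ∀ m, 0 < m → m ≤ N → a ^ m ≠ 1 := by
  classical
  obtain ⟨a, ha⟩ := Infinite.exists_notMem_finset
    (insert 0 ((Finset.Icc 1 N).biUnion fun m => (Polynomial.nthRoots m (1 : K)).toFinset))
  simp only [Finset.mem_insert, Finset.mem_biUnion, Finset.mem_Icc, Multiset.mem_toFinset,
    not_or, not_exists, not_and] at ha
  refine ⟨Units.mk0 a ha.1, fun m hm hmN h => ha.2 m ⟨hm, hmN⟩ ?_⟩
  rw [Polynomial.mem_nthRoots hm]
  simpa [Units.ext_iff] using h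

lemma exists_injective_mul_iotaPerm_eq_one (K : Type*) [Field K] [Infinite K] (n : ℕ) :
    ∃ t : Fin n → K, (∀ i, t i * t (iotaPerm n i) = 1) ∧ Function.Injective t := by
  obtain ⟨a, ha⟩ := exists_units_pow_ne_one K (2 * n)
  -- `t i = a ^ (2i + 1 - n)`: distinct exponents of absolute value `< n`, negated by `ι`
  let e : Fin n → ℤ := fun i => 2 * i + 1 - n
  have he : ∀ i, e (iotaPerm n i) = - e i := fun i => by
    have := i.isLt; simp only [e, iotaPerm_apply_val]; omega
  refine ⟨fun i => ((a ^ e i : Kˣ) : K), fun i => ?_, fun i j hij => ?_⟩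
  · rw [← Units.val_mul, he, _root_.zpow_neg, mul_inv_cancel, Units.val_one]
  · have h1 : a ^ (e i - e j) = 1 := by
      rw [_root_.zpow_sub, Units.ext hij, mul_inv_cancel]
    rw [← pow_natAbs_eq_one] at h1
    have hi := i.isLt; have hj := j.isLt
    by_contra hne
    have hne' : (i : ℕ) ≠ j := fun h => hne (Fin.ext h)
    exact ha _ (by simp only [e]; omega) (by simp only [e]; omega) h1

lemma eq_permGL_of_mem_Vbar {w : GL (Fin n) F} (hw : w ∈ Vbar n F) :
    ∃ σ : Equiv.Perm (Fin n), σ * iotaPerm n = iotaPerm n * σ ∧ w = permGL n F σ := by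
  obtain ⟨σ, hσ, hw⟩ := hw
  exact ⟨σ, hσ, Units.ext hw⟩

lemma Vbar_le_OJ : Vbar n F ≤ OJ n F := fun _ hw => by
  obtain ⟨σ, hσ, rfl⟩ := eq_permGL_of_mem_Vbar hw
  exact permMat_transpose_mul_Jmat_mul_permMat hσ

lemma Vbar_le_normalizer_Tbar :
    Vbar n F ≤ Subgroup.normalizer (Tbar n F : Set (GL (Fin n) F)) := by
  rw [Subgroup.le_set_normalizer_iff]
  rintro w hw h ⟨hO, hdiag⟩
  refine ⟨mul_mem (mul_mem (Vbar_le_OJ hw) hO) (inv_mem (Vbar_le_OJ hw)), ?_⟩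
  obtain ⟨σ, -, rfl⟩ := eq_permGL_of_mem_Vbar hw
  change (permMat n F σ * h * permMat n F σ⁻¹).IsDiag
  rw [← inv_inv σ, ← permMat_transpose, inv_inv, permMat_transpose_mul_mul_permMat]
  exact hdiag.submatrix σ⁻¹.injective

lemma Tbar_inf_Vbar_eq_bot : Tbar n F ⊓ Vbar n F = ⊥ := by
  refine eq_bot_iff.2 fun x ⟨⟨_, hdiag⟩, hV⟩ => ?_
  obtain ⟨σ, -, rfl⟩ := eq_permGL_of_mem_Vbar hV
  have hσ : σ = 1 := Equiv.ext fun j => by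
    by_contra hne
    simpa [permGL, permMat_apply] using hdiag (i := σ j) (j := j) hne
  rw [Subgroup.mem_bot, hσ]
  exact Units.ext (permMat_one n F)

lemma Tbar_le_SLgl (hn : Even n) : Tbar n F ≤ SLgl n F := by
  rintro t ⟨hO, hdiag⟩
  change (t : Matrix (Fin n) (Fin n) F)ᵀ * Jmat n F * t = Jmat n F at hO
  change (t : Matrix (Fin n) (Fin n) F).det = 1
  rw [← hdiag.diagonal_diag] at hO ⊢
  rw [det_diagonal]
  exact prod_eq_one_of_mul_iotaPerm_eq_one hn
    (diagonal_transpose_mul_Jmat_mul_diagonal_eq_iff.1 hO)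

lemma exists_mem_Tbar_injective_diag [Infinite F] :
    ∃ t ∈ Tbar n F, Function.Injective (t : Matrix (Fin n) (Fin n) F).diag := by
  obtain ⟨d, hd, hinj⟩ := exists_injective_mul_iotaPerm_eq_one F n
  have hdet : (diagonal d).det ≠ 0 := by
    rw [det_diagonal, Finset.prod_ne_zero_iff]
    exact fun i _ => left_ne_zero_of_mul_eq_one (hd i)
  refine ⟨GeneralLinearGroup.mkOfDetNeZero _ hdet,
    ⟨diagonal_transpose_mul_Jmat_mul_diagonal_eq_iff.2 hd, isDiag_diagonal d⟩, ?_⟩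
  simpa using hinj

lemma exists_eq_diagonal_mul_permMat_of_mem_normalizer_Tbar [Infinite F] {x : GL (Fin n) F}
    (hx : x ∈ Subgroup.normalizer (Tbar n F : Set (GL (Fin n) F))) :
    ∃ (d : Fin n → F) (σ : Equiv.Perm (Fin n)),
      (x : Matrix (Fin n) (Fin n) F) = diagonal d * permMat n F σ := by
  obtain ⟨t, ht, hinj⟩ := exists_mem_Tbar_injective_diag (n := n) (F := F)
  have hconj : (↑(x * t * x⁻¹) : Matrix (Fin n) (Fin n) F).IsDiag :=
    ((Subgroup.mem_normalizer_iff.1 hx t).1 ht).2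
  have hcomm : diagonal (↑(x * t * x⁻¹) : Matrix (Fin n) (Fin n) F).diag * x =
      x * diagonal (t : Matrix (Fin n) (Fin n) F).diag := by
    rw [hconj.diagonal_diag, ht.2.diagonal_diag, ← Units.val_mul, ← Units.val_mul,
      inv_mul_cancel_right]
  exact exists_eq_diagonal_mul_permMat (GeneralLinearGroup.det_ne_zero x)
    fun i j k => eq_of_diagonal_mul_eq_mul_diagonal hcomm hinj

lemma exists_mem_Tbar_mem_Wbar_eq_mul [Infinite F] (hn : Even n) {x : GL (Fin n) F}
    (hx : x ∈ SOJ n F ⊓ Subgroup.normalizer (Tbar n F : Set (GL (Fin n) F))) :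
    ∃ t ∈ Tbar n F, ∃ w ∈ Wbar n F, x = t * w := by
  obtain ⟨⟨hxO, hxdet⟩, hxN⟩ := hx
  obtain ⟨d, σ, hxd⟩ := exists_eq_diagonal_mul_permMat_of_mem_normalizer_Tbar hxN
  have hσ : σ * iotaPerm n = iotaPerm n * σ := by
    have hxJ : (x : Matrix (Fin n) (Fin n) F)ᵀ * Jmat n F * x = Jmat n F := hxO
    rw [hxd] at hxJ
    exact commute_iotaPerm_of_transpose_mul_Jmat_mul hxJ
  have hwV : permGL n F σ ∈ Vbar n F := ⟨σ, hσ, rfl⟩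
  have htT : x * (permGL n F σ)⁻¹ ∈ Tbar n F := by
    refine ⟨mul_mem hxO (inv_mem (Vbar_le_OJ hwV)), ?_⟩
    change ((x : Matrix (Fin n) (Fin n) F) * permMat n F σ⁻¹).IsDiag
    rw [hxd, mul_assoc, permMat_mul, mul_inv_cancel, permMat_one, mul_one]
    exact isDiag_diagonal d
  refine ⟨_, htT, permGL n F σ, ⟨hwV, ?_⟩, by group⟩
  simpa using mul_mem (inv_mem (Tbar_le_SLgl hn htT)) hxdet

end

theorem normalizer_Tbar_eq_Tbar_mul_Wbar_general
    (F : Type) [Field F] [IsAlgClosed F]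
    (l : ℕ) :
    Wbar (2 * l) F ≤ SOJ (2 * l) F ⊓ Subgroup.normalizer (Tbar (2 * l) F : Set (GL (Fin (2 * l)) F)) ∧
    Tbar (2 * l) F ⊓ Wbar (2 * l) F = ⊥ ∧
    ∀ x ∈ SOJ (2 * l) F ⊓ Subgroup.normalizer (Tbar (2 * l) F : Set (GL (Fin (2 * l)) F)),
      ∃ t ∈ Tbar (2 * l) F, ∃ w ∈ Wbar (2 * l) F, x = t * w := by
  refine ⟨fun w hw => ⟨⟨Vbar_le_OJ hw.1, hw.2⟩, Vbar_le_normalizer_Tbar hw.1⟩, ?_,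
    fun x hx => exists_mem_Tbar_mem_Wbar_eq_mul (even_two_mul l) hx⟩
  exact eq_bot_iff.2 ((inf_le_inf_left _ inf_le_left).trans Tbar_inf_Vbar_eq_bot.le)

/-- For `F` algebraically closed of characteristic `≠ 2` and `l ≥ 4`,
the normalizer of `T̄` in `SO_J` is the internal semidirect product of `T̄` by `W̄`. -/
theorem normalizer_Tbar_eq_Tbar_mul_Wbar
    (F : Type) [Field F] [IsAlgClosed F] (hchar : ringChar F ≠ 2)
    (l : ℕ) (hl : 4 ≤ l) :
    Wbar (2 * l) F ≤ SOJ (2 * l) F ⊓ Subgroup.normalizer (Tbar (2 * l) F : Set (GL (Fin (2 * l)) F)) ∧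
    Tbar (2 * l) F ⊓ Wbar (2 * l) F = ⊥ ∧
    ∀ x ∈ SOJ (2 * l) F ⊓ Subgroup.normalizer (Tbar (2 * l) F : Set (GL (Fin (2 * l)) F)),
      ∃ t ∈ Tbar (2 * l) F, ∃ w ∈ Wbar (2 * l) F, x = t * w :=
  normalizer_Tbar_eq_Tbar_mul_Wbar_general F l
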